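/- arXiv:1207.2848 — 3 statements merged into one kernel-verified Lean document; each statement's English description precedes it below -/
import Mathlib

section
/- If the initial population state of an n-consumer game is close to its expectation, the social welfare achieved by any dynamic oblivious strategy is close (per consumer) to its continuum counterpart: for any initial exogenous state s₀ and any ε > 0, there exists δ > 0 such that for every n, every initial population state fⁿ₀ with max_{x∈𝒳₀} |fⁿ₀(x) − η_{s₀}(x)| ≤ δ, and every dynamic oblivious strategy ϑ, one has | 𝒲ⁿ₀(fⁿ₀, s₀ | ϑ⃗ⁿ) − n W̃₀(s₀ | ϑ) | ≤ ε n, where ϑ⃗ⁿ = (ϑ,…,ϑ) is the symmetric profile in which all n consumers use ϑ. -/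
/-!
Dynamic pricing model of Tsitsiklis and Xu, "Pricing of Fluctuations in
Electricity Markets".

* `S` : finite exogenous state space, evolving as a Markov chain with kernel `K`;
* `X0` : finite set of consumer types, with type distribution `eta s0` given the
  initial exogenous state `s0`;
* actions lie in `[0, B]`, internal states in `[0, Zbd]`, updated by `r`;
* `U t x z s a` : stage utility; `Cc`, `Hc0`, `Hc` : continuum primary and
  ancillary cost functions, with (partial) derivatives `dC`, `dH0`, `dH1`
  (w.r.t. the first demand argument) and `dH2` (w.r.t. the second).
In the `n`-consumer model the costs scale as `Cⁿ(A,s) = n * Cc (A/n) s` etc., so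
the `n`-consumer prices are the continuum marginal costs evaluated at the
per-capita demand `A / n`.
-/

noncomputable section

structure ElecModel (S : Type*) (X0 : Type*) [Fintype S] [DecidableEq S] [Fintype X0] where
  T : ℕ
  B : ℝ
  B_pos : 0 < B
  Zbd : ℝ
  K : S → S → ℝ
  K_nonneg : ∀ s s', 0 ≤ K s s'
  K_sum : ∀ s, ∑ s' : S, K s s' = 1
  eta : S → X0 → ℝ
  eta_nonneg : ∀ s x, 0 ≤ eta s x
  eta_sum : ∀ s, ∑ x : X0, eta s x = 1
  r : X0 → ℝ → ℝ → S → ℝ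
  U : ℕ → X0 → ℝ → S → ℝ → ℝ
  Cc : ℝ → S → ℝ
  Hc0 : ℝ → S → ℝ
  Hc : ℝ → ℝ → S → S → ℝ
  dC : ℝ → S → ℝ
  dH0 : ℝ → S → ℝ
  dH1 : ℝ → ℝ → S → S → ℝ
  dH2 : ℝ → ℝ → S → S → ℝ

namespace ElecModel

variable {S : Type*} {X0 : Type*} [Fintype S] [DecidableEq S] [Fintype X0] [DecidableEq X0]

/-- A dynamic oblivious strategy: the action depends only on the consumer's type and
the history of exogenous states up to the current stage. -/
structure OblStrategy (M : ElecModel S X0) where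
  act : ℕ → X0 → (ℕ → S) → ℝ
  act_mem : ∀ t x h, act t x h ∈ Set.Icc (0 : ℝ) M.B
  act_prefix : ∀ t x h h', (∀ τ ≤ t, h τ = h' τ) → act t x h = act t x h'

/-- A history-dependent strategy: the action depends on the consumer's augmented state
`(previous action, type, internal state)`, the history of exogenous states up to the
current stage, and the empirical distribution (as a multiset) of the other consumers'
augmented states. -/
structure HistStrategy (M : ElecModel S X0) where
  act : ℕ → ℝ × X0 × ℝ → (ℕ → S) → Multiset (ℝ × X0 × ℝ) → ℝ
  act_mem : ∀ t y h f, act t y h f ∈ Set.Icc (0 : ℝ) M.B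
  act_prefix : ∀ t y h h' f, (∀ τ ≤ t, h τ = h' τ) → act t y h f = act t y h' f

/-- Probability of the Markov chain of exogenous states following `h` on stages `0,…,T`,
starting from `s0`. -/
def histProb (M : ElecModel S X0) (s0 : S) (h : ℕ → S) : ℝ :=
  (if h 0 = s0 then (1 : ℝ) else 0) * ∏ t ∈ Finset.range M.T, M.K (h t) (h (t + 1))

def extendHist (M : ElecModel S X0) (g : Fin (M.T + 1) → S) : ℕ → S :=
  fun n => g ⟨min n M.T, Nat.lt_succ_of_le (min_le_right n M.T)⟩

/-- Expectation, over the Markov histories of exogenous states starting at `s0`,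
of a function of the history. -/
def expectHist (M : ElecModel S X0) (s0 : S) (F : (ℕ → S) → ℝ) : ℝ :=
  ∑ g : Fin (M.T + 1) → S, M.histProb s0 (M.extendHist g) * F (M.extendHist g)

/-- The internal state trajectory of a consumer of type `x` along history `h`
under the action sequence `a` : `z 0 = 0`, `z (t+1) = r x (z t) (a t) (h (t+1))`. -/
def zTraj (M : ElecModel S X0) (x : X0) (h : ℕ → S) (a : ℕ → ℝ) : ℕ → ℝ
  | 0 => 0
  | t + 1 => M.zTraj x h a t |> fun z => M.r x z (a t) (h (t + 1))

/-- Average (per-capita) demand in the continuum model under the oblivious strategy `ν`. -/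
def avgDemand (M : ElecModel S X0) (ν : OblStrategy M) (s0 : S) (h : ℕ → S) (t : ℕ) : ℝ :=
  ∑ x : X0, M.eta s0 x * ν.act t x h

/-- Continuum price `p̃_t`. -/
def pTil (M : ElecModel S X0) (ν : OblStrategy M) (s0 : S) (h : ℕ → S) (t : ℕ) : ℝ :=
  M.dC (M.avgDemand ν s0 h t) (h t)

/-- Continuum price `w̃_t`. -/
def wTil (M : ElecModel S X0) (ν : OblStrategy M) (s0 : S) (h : ℕ → S) : ℕ → ℝ
  | 0 => M.dH0 (M.avgDemand ν s0 h 0) (h 0)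
  | t + 1 => M.dH2 (M.avgDemand ν s0 h t) (M.avgDemand ν s0 h (t + 1)) (h t) (h (t + 1))

/-- Continuum price `q̃_t` (charged on the previous stage's demand). -/
def qTil (M : ElecModel S X0) (ν : OblStrategy M) (s0 : S) (h : ℕ → S) : ℕ → ℝ
  | 0 => 0
  | t + 1 => M.dH1 (M.avgDemand ν s0 h t) (M.avgDemand ν s0 h (t + 1)) (h t) (h (t + 1))

/-- Total oblivious stage value along a history: consumer of type `x` follows `νhat`,
prices are induced by `ν`. -/
def oblStageSum (M : ElecModel S X0) (νhat ν : OblStrategy M) (s0 : S) (x : X0)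
    (h : ℕ → S) : ℝ :=
  ∑ t ∈ Finset.range (M.T + 1),
    (M.U t x (M.zTraj x h (fun τ => νhat.act τ x h) t) (h t) (νhat.act t x h)
      - (M.pTil ν s0 h t + M.wTil ν s0 h t) * νhat.act t x h
      - M.qTil ν s0 h t * (if t = 0 then 0 else νhat.act (t - 1) x h))

/-- Oblivious value function `Ṽ_{i,0}(x₀, s₀ ∣ ν̂, ν)`. -/
def oblValue (M : ElecModel S X0) (νhat ν : OblStrategy M) (x0 : X0) (s0 : S) : ℝ :=
  M.expectHist s0 (fun h => M.oblStageSum νhat ν s0 x0 h)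

/-- A Dynamic Oblivious Equilibrium. -/
def IsDOE (M : ElecModel S X0) (ν : OblStrategy M) : Prop :=
  ∀ (νhat : OblStrategy M) (x0 : X0) (s0 : S),
    M.oblValue νhat ν x0 s0 ≤ M.oblValue ν ν x0 s0

/-- The previous action of a consumer following the oblivious strategy `ν` (zero at stage 0). -/
def prevActObl (M : ElecModel S X0) (ν : OblStrategy M) (x : X0) (h : ℕ → S) : ℕ → ℝ
  | 0 => 0
  | t + 1 => ν.act t x h

/-- The empirical distribution (multiset) of the augmented states of the `m` consumers
other than `i`, all following the oblivious strategy `ν`, with type profile `ω`. -/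
def othersAug (M : ElecModel S X0) (m : ℕ) (ν : OblStrategy M) (ω : Fin m → X0)
    (h : ℕ → S) (t : ℕ) : Multiset (ℝ × X0 × ℝ) :=
  (Finset.univ : Finset (Fin m)).val.map
    (fun j => (M.prevActObl ν (ω j) h t, ω j, M.zTraj (ω j) h (fun τ => ν.act τ (ω j) h) t))

/-- Consumer `i`'s trajectory `(action at t, internal state at t)` in the `(m+1)`-consumer
game when she plays the history-dependent strategy `κ` while the `m` other consumers
(with type profile `ω`) play the oblivious strategy `ν`. -/
def iTraj (M : ElecModel S X0) (m : ℕ) (κ : HistStrategy M) (ν : OblStrategy M)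
    (x0 : X0) (ω : Fin m → X0) (h : ℕ → S) : ℕ → ℝ × ℝ
  | 0 => (κ.act 0 ((0 : ℝ), x0, (0 : ℝ)) h (M.othersAug m ν ω h 0), 0)
  | t + 1 =>
      M.iTraj m κ ν x0 ω h t |> fun prev =>
        (M.r x0 prev.2 prev.1 (h (t + 1))) |> fun z' =>
          (κ.act (t + 1) (prev.1, x0, z') h (M.othersAug m ν ω h (t + 1)), z')

/-- Aggregate demand in the `(m+1)`-consumer game. -/
def aggDemandN (M : ElecModel S X0) (m : ℕ) (κ : HistStrategy M) (ν : OblStrategy M)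
    (x0 : X0) (ω : Fin m → X0) (h : ℕ → S) (t : ℕ) : ℝ :=
  (M.iTraj m κ ν x0 ω h t).1 + ∑ j : Fin m, ν.act t (ω j) h

/-- `n`-consumer price `p_t = (Cⁿ)'(A_t, s_t) = C̃'(A_t/n, s_t)`, with `n = m+1`. -/
def pN (M : ElecModel S X0) (m : ℕ) (κ : HistStrategy M) (ν : OblStrategy M)
    (x0 : X0) (ω : Fin m → X0) (h : ℕ → S) (t : ℕ) : ℝ :=
  M.dC (M.aggDemandN m κ ν x0 ω h t / ((m : ℝ) + 1)) (h t)

/-- `n`-consumer price `w_t`, with `n = m+1`. -/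
def wN (M : ElecModel S X0) (m : ℕ) (κ : HistStrategy M) (ν : OblStrategy M)
    (x0 : X0) (ω : Fin m → X0) (h : ℕ → S) : ℕ → ℝ
  | 0 => M.dH0 (M.aggDemandN m κ ν x0 ω h 0 / ((m : ℝ) + 1)) (h 0)
  | t + 1 =>
      M.dH2 (M.aggDemandN m κ ν x0 ω h t / ((m : ℝ) + 1))
        (M.aggDemandN m κ ν x0 ω h (t + 1) / ((m : ℝ) + 1)) (h t) (h (t + 1))

/-- `n`-consumer price `q_t` (charged on the previous stage's demand), with `n = m+1`. -/
def qN (M : ElecModel S X0) (m : ℕ) (κ : HistStrategy M) (ν : OblStrategy M)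
    (x0 : X0) (ω : Fin m → X0) (h : ℕ → S) : ℕ → ℝ
  | 0 => 0
  | t + 1 =>
      M.dH1 (M.aggDemandN m κ ν x0 ω h t / ((m : ℝ) + 1))
        (M.aggDemandN m κ ν x0 ω h (t + 1) / ((m : ℝ) + 1)) (h t) (h (t + 1))

/-- Consumer `i`'s total payoff along the history `h`. -/
def iPayoff (M : ElecModel S X0) (m : ℕ) (κ : HistStrategy M) (ν : OblStrategy M)
    (x0 : X0) (ω : Fin m → X0) (h : ℕ → S) : ℝ :=
  ∑ t ∈ Finset.range (M.T + 1),
    (M.U t x0 (M.iTraj m κ ν x0 ω h t).2 (h t) (M.iTraj m κ ν x0 ω h t).1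
      - (M.pN m κ ν x0 ω h t + M.wN m κ ν x0 ω h t) * (M.iTraj m κ ν x0 ω h t).1
      - M.qN m κ ν x0 ω h t * (if t = 0 then 0 else (M.iTraj m κ ν x0 ω h (t - 1)).1))

/-- Consumer `i`'s expected payoff `Vⁿ_{i,0}(x₀, s₀ ∣ κ, ν)` in the `(m+1)`-consumer game:
the other `m` consumers' types are drawn i.i.d. from `eta s0` and all of them use `ν`. -/
def Vn (M : ElecModel S X0) (m : ℕ) (κ : HistStrategy M) (ν : OblStrategy M)
    (x0 : X0) (s0 : S) : ℝ :=
  ∑ ω : Fin m → X0, (∏ j : Fin m, M.eta s0 (ω j)) *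
    M.expectHist s0 (fun h => M.iPayoff m κ ν x0 ω h)

/-- An oblivious strategy regarded as a history-dependent strategy. -/
def OblStrategy.toHist {M : ElecModel S X0} (ν : OblStrategy M) : HistStrategy M where
  act := fun t y h _ => ν.act t y.2.1 h
  act_mem := fun t y h _ => ν.act_mem t y.2.1 h
  act_prefix := fun t y h h' _ hp => ν.act_prefix t y.2.1 h h' hp

/-- Stage social welfare in the continuum model. -/
def contStageWelfare (M : ElecModel S X0) (ν : OblStrategy M) (s0 : S) (h : ℕ → S)
    (t : ℕ) : ℝ :=
  (∑ x : X0, M.eta s0 x *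
      M.U t x (M.zTraj x h (fun τ => ν.act τ x h) t) (h t) (ν.act t x h))
    - M.Cc (M.avgDemand ν s0 h t) (h t)
    - (if t = 0 then M.Hc0 (M.avgDemand ν s0 h 0) (h 0)
        else M.Hc (M.avgDemand ν s0 h (t - 1)) (M.avgDemand ν s0 h t) (h (t - 1)) (h t))

/-- Expected social welfare `W̃₀(s₀ ∣ ν)` in the continuum model. -/
def contWelfare (M : ElecModel S X0) (ν : OblStrategy M) (s0 : S) : ℝ :=
  M.expectHist s0 (fun h => ∑ t ∈ Finset.range (M.T + 1), M.contStageWelfare ν s0 h t)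

/-- Joint trajectory `(action at t, internal state at t)` of the `n` consumers with type
profile `ω` when all of them use the history-dependent strategy `κ`. -/
def jointTraj (M : ElecModel S X0) (n : ℕ) (κ : HistStrategy M) (ω : Fin n → X0)
    (h : ℕ → S) : ℕ → Fin n → ℝ × ℝ
  | 0 => fun i =>
      (κ.act 0 ((0 : ℝ), ω i, (0 : ℝ)) h
        (((Finset.univ : Finset (Fin n)).erase i).val.map fun j => ((0 : ℝ), ω j, (0 : ℝ))), 0)
  | t + 1 => fun i =>
      M.jointTraj n κ ω h t |> fun prev =>
        (fun j : Fin n => ((prev j).1, ω j, M.r (ω j) (prev j).2 (prev j).1 (h (t + 1))))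
          |> fun aug =>
            (κ.act (t + 1) (aug i) h (((Finset.univ : Finset (Fin n)).erase i).val.map aug),
              M.r (ω i) (prev i).2 (prev i).1 (h (t + 1)))

/-- Aggregate demand in the `n`-consumer game when everyone uses `κ`. -/
def aggDemandAll (M : ElecModel S X0) (n : ℕ) (κ : HistStrategy M) (ω : Fin n → X0)
    (h : ℕ → S) (t : ℕ) : ℝ :=
  ∑ i : Fin n, (M.jointTraj n κ ω h t i).1

/-- Realized total social welfare along the history `h` in the `n`-consumer game under the
symmetric strategy profile `(κ,…,κ)`; the `n`-consumer costs are `n * C̃(A/n)` etc. -/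
def welfProfile (M : ElecModel S X0) (n : ℕ) (κ : HistStrategy M) (ω : Fin n → X0)
    (h : ℕ → S) : ℝ :=
  ∑ t ∈ Finset.range (M.T + 1),
    ((∑ i : Fin n, M.U t (ω i) (M.jointTraj n κ ω h t i).2 (h t) (M.jointTraj n κ ω h t i).1)
      - (n : ℝ) * M.Cc (M.aggDemandAll n κ ω h t / n) (h t)
      - (if t = 0 then (n : ℝ) * M.Hc0 (M.aggDemandAll n κ ω h 0 / n) (h 0)
          else (n : ℝ) * M.Hc (M.aggDemandAll n κ ω h (t - 1) / n)
                 (M.aggDemandAll n κ ω h t / n) (h (t - 1)) (h t)))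

/-- Expected social welfare `𝒲ⁿ₀` in the `n`-consumer game under the symmetric
profile `(κ,…,κ)`, the expectation taken over the i.i.d. consumer types
(equivalently, over the initial population state) and the Markov exogenous states. -/
def expWelfN (M : ElecModel S X0) (n : ℕ) (κ : HistStrategy M) (s0 : S) : ℝ :=
  ∑ ω : Fin n → X0, (∏ i : Fin n, M.eta s0 (ω i)) *
    M.expectHist s0 (fun h => M.welfProfile n κ ω h)

/-- Cumulative utility `Ū_{h_T}(x₀, a₀, …, a_T)` of a type-`x₀` consumer along history `h`
as a function of her action sequence, the internal states being generated by `r`. -/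
def cumUtility (M : ElecModel S X0) (x0 : X0) (h : ℕ → S) (a : ℕ → ℝ) : ℝ :=
  ∑ t ∈ Finset.range (M.T + 1), M.U t x0 (M.zTraj x0 h a t) (h t) (a t)

/-- The initial population state (empirical type distribution) of the type profile `ω`. -/
def popState (n : ℕ) (ω : Fin n → X0) (x : X0) : ℝ :=
  ((Finset.univ.filter fun i => ω i = x).card : ℝ) / n

/-- Assumptions 1–3 of the paper: differentiability of the cost functions, monotone
primary cost, marginal costs bounded by `P` and uniformly equicontinuous on `[0,∞)`,
utilities with values in `[0,Q]` and continuous in the action, internal states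
staying in `[0, Zbd]`. -/
structure RegularAssumptions (M : ElecModel S X0) (P Q : ℝ) : Prop where
  deriv_C : ∀ s : S, ∀ A ∈ Set.Ici (0 : ℝ),
    HasDerivWithinAt (fun u => M.Cc u s) (M.dC A s) (Set.Ici 0) A
  deriv_H0 : ∀ s : S, ∀ A ∈ Set.Ici (0 : ℝ),
    HasDerivWithinAt (fun u => M.Hc0 u s) (M.dH0 A s) (Set.Ici 0) A
  deriv_H1 : ∀ (s s' : S) (A' : ℝ), ∀ A ∈ Set.Ici (0 : ℝ),
    HasDerivWithinAt (fun u => M.Hc u A' s s') (M.dH1 A A' s s') (Set.Ici 0) A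
  deriv_H2 : ∀ (s s' : S) (A : ℝ), ∀ A' ∈ Set.Ici (0 : ℝ),
    HasDerivWithinAt (fun u => M.Hc A u s s') (M.dH2 A A' s s') (Set.Ici 0) A'
  C_mono : ∀ s : S, MonotoneOn (fun u => M.Cc u s) (Set.Ici 0)
  bound_C : ∀ s : S, ∀ A ∈ Set.Ici (0 : ℝ), |M.dC A s| ≤ P
  bound_H0 : ∀ s : S, ∀ A ∈ Set.Ici (0 : ℝ), |M.dH0 A s| ≤ P
  bound_H1 : ∀ (s s' : S), ∀ A' ∈ Set.Icc (0 : ℝ) M.B, ∀ A ∈ Set.Ici (0 : ℝ),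
    |M.dH1 A A' s s'| ≤ P
  bound_H2 : ∀ (s s' : S), ∀ A' ∈ Set.Icc (0 : ℝ) M.B, ∀ A ∈ Set.Ici (0 : ℝ),
    |M.dH2 A' A s s'| ≤ P
  equicont_C : ∀ ε > (0 : ℝ), ∃ δ > (0 : ℝ), ∀ s : S, ∀ A ∈ Set.Ici (0 : ℝ),
    ∀ A2 ∈ Set.Ici (0 : ℝ), |A - A2| ≤ δ → |M.dC A s - M.dC A2 s| ≤ ε
  equicont_H0 : ∀ ε > (0 : ℝ), ∃ δ > (0 : ℝ), ∀ s : S, ∀ A ∈ Set.Ici (0 : ℝ),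
    ∀ A2 ∈ Set.Ici (0 : ℝ), |A - A2| ≤ δ → |M.dH0 A s - M.dH0 A2 s| ≤ ε
  equicont_H1 : ∀ ε > (0 : ℝ), ∃ δ > (0 : ℝ), ∀ (s s' : S), ∀ A' ∈ Set.Icc (0 : ℝ) M.B,
    ∀ A ∈ Set.Ici (0 : ℝ), ∀ A2 ∈ Set.Ici (0 : ℝ),
      |A - A2| ≤ δ → |M.dH1 A A' s s' - M.dH1 A2 A' s s'| ≤ ε
  equicont_H2 : ∀ ε > (0 : ℝ), ∃ δ > (0 : ℝ), ∀ (s s' : S), ∀ A' ∈ Set.Icc (0 : ℝ) M.B,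
    ∀ A ∈ Set.Ici (0 : ℝ), ∀ A2 ∈ Set.Ici (0 : ℝ),
      |A - A2| ≤ δ → |M.dH2 A' A s s' - M.dH2 A' A2 s s'| ≤ ε
  U_bounds : ∀ (t : ℕ) (x : X0) (z : ℝ) (s : S) (a : ℝ), M.U t x z s a ∈ Set.Icc (0 : ℝ) Q
  U_cont : ∀ (t : ℕ) (x : X0) (z : ℝ) (s : S), Continuous fun a => M.U t x z s a
  Zbd_nonneg : 0 ≤ M.Zbd
  r_mem : ∀ (x : X0) (z a : ℝ) (s' : S), z ∈ Set.Icc (0 : ℝ) M.Zbd →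
    a ∈ Set.Icc (0 : ℝ) M.B → M.r x z a s' ∈ Set.Icc (0 : ℝ) M.Zbd

/-- Assumption 4 of the paper (convexity): convex costs, concave cumulative utility,
monotone internal-state maps with one-sided derivatives, and utilities with one-sided
derivatives in the internal state. -/
structure ConvexAssumptions (M : ElecModel S X0) : Prop where
  C_convex : ∀ s : S, ConvexOn ℝ Set.univ (fun A => M.Cc A s)
  H_convex : ∀ s s' : S, ConvexOn ℝ Set.univ (fun p : ℝ × ℝ => M.Hc p.1 p.2 s s')
  cumU_concave : ∀ (x0 : X0) (h : ℕ → S),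
    ConcaveOn ℝ {a : ℕ → ℝ | ∀ t, a t ∈ Set.Icc (0 : ℝ) M.B} (fun a => M.cumUtility x0 h a)
  k_monotone : ∀ (x0 : X0) (h : ℕ → S) (t τ : ℕ), τ < t → ∀ a : ℕ → ℝ,
    Monotone (fun u => M.zTraj x0 h (Function.update a τ u) t) ∨
      Antitone (fun u => M.zTraj x0 h (Function.update a τ u) t)
  k_onesided : ∀ (x0 : X0) (h : ℕ → S) (t τ : ℕ) (a : ℕ → ℝ) (u : ℝ),
    (∃ d, HasDerivWithinAt (fun v => M.zTraj x0 h (Function.update a τ v) t) d (Set.Ici u) u) ∧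
    (∃ d, HasDerivWithinAt (fun v => M.zTraj x0 h (Function.update a τ v) t) d (Set.Iic u) u)
  U_z_onesided : ∀ (t : ℕ) (x : X0) (s : S) (a z : ℝ),
    (∃ d, HasDerivWithinAt (fun z' => M.U t x z' s a) d (Set.Ici z) z) ∧
    (∃ d, HasDerivWithinAt (fun z' => M.U t x z' s a) d (Set.Iic z) z)

end ElecModel

/-!
If every consumer follows the same oblivious strategy `ϑ`, each consumer of type `x` acts exactly
as type `x` does in the continuum model. Since the `n`-consumer costs are `n • C̃(A / n)` etc.,
along every history the realized welfare is therefore `n` times the continuum stage welfare in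
which `η_{s₀}` is replaced by the empirical type distribution `fⁿ₀`. That stage welfare is
Lipschitz in the type weights: utilities lie in `[0, Q]`, demands in `[0, B]`, and the costs are
`P`-Lipschitz by the mean value theorem, so weights at sup-distance `δ` change each stage welfare
by at most `|𝒳₀| δ (Q + 3 P B)`. Summing over the `T + 1` stages and averaging over histories,
it suffices to take `δ` proportional to `ε`.
-/

open Finset

theorem sum_indicator_mul_prod_transition_eq_one {S : Type*} [Fintype S] [DecidableEq S]
    (K : S → S → ℝ) (hK : ∀ s, ∑ s', K s s' = 1) (T : ℕ) (s0 : S) :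
    ∑ g : Fin (T + 1) → S,
      (if g 0 = s0 then (1 : ℝ) else 0) * ∏ t : Fin T, K (g t.castSucc) (g t.succ) = 1 := by
  induction T with
  | zero => simp [← (Equiv.funUnique (Fin 1) S).symm.sum_comp]
  | succ T ih =>
    conv_rhs => rw [← ih]
    rw [← (Fin.snocEquiv fun _ => S).sum_comp, Fintype.sum_prod_type, sum_comm]
    refine sum_congr rfl fun g _ => ?_
    simp only [Fin.snocEquiv_apply, Fin.prod_univ_castSucc, Fin.succ_castSucc,
      Fin.snoc_castSucc, Fin.succ_last, Fin.snoc_last, ← Fin.castSucc_zero]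
    rw [← mul_sum, ← mul_sum, hK, mul_one]

theorem abs_sum_mul_sub_sum_mul_le {ι : Type*} [Fintype ι] {f f' g : ι → ℝ} {δ G : ℝ}
    (hf : ∀ i, |f i - f' i| ≤ δ) (hg : ∀ i, |g i| ≤ G) :
    |∑ i, f i * g i - ∑ i, f' i * g i| ≤ Fintype.card ι * (δ * G) := by
  rw [← sum_sub_distrib]
  calc |∑ i, (f i * g i - f' i * g i)| ≤ ∑ i, |f i * g i - f' i * g i| :=
        abs_sum_le_sum_abs _ _
    _ ≤ ∑ _i : ι, δ * G := by
        gcongr with i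
        rw [← sub_mul, abs_mul]
        exact mul_le_mul (hf i) (hg i) (abs_nonneg _) ((abs_nonneg _).trans (hf i))
    _ = Fintype.card ι * (δ * G) := by simp

theorem sum_mul_mem_Icc {ι : Type*} [Fintype ι] {f g : ι → ℝ} {B : ℝ}
    (hf : ∀ i, 0 ≤ f i) (hf1 : ∑ i, f i = 1) (hg : ∀ i, g i ∈ Set.Icc 0 B) :
    ∑ i, f i * g i ∈ Set.Icc 0 B := by
  refine ⟨sum_nonneg fun i _ => mul_nonneg (hf i) (hg i).1, ?_⟩
  calc ∑ i, f i * g i ≤ ∑ i, f i * B := by gcongr with i; exacts [hf i, (hg i).2]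
    _ = B := by rw [← sum_mul, hf1, one_mul]

theorem abs_sub_le_of_hasDerivWithinAt_Ici {f f' : ℝ → ℝ} {P a b : ℝ}
    (hf : ∀ A ∈ Set.Ici (0 : ℝ), HasDerivWithinAt f (f' A) (Set.Ici 0) A)
    (hf' : ∀ A ∈ Set.Ici (0 : ℝ), |f' A| ≤ P) (ha : 0 ≤ a) (hb : 0 ≤ b) :
    |f a - f b| ≤ P * |a - b| :=
  (convex_Ici 0).norm_image_sub_le_of_norm_hasDerivWithin_le hf hf' hb ha

namespace ElecModel

section Population

theorem popState_nonneg {X0 : Type*} [DecidableEq X0] {n : ℕ} (ω : Fin n → X0) (x : X0) :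
    0 ≤ popState n ω x := by
  unfold popState; positivity

variable {X0 : Type*} [Fintype X0] [DecidableEq X0] {n : ℕ}

theorem sum_popState (hn : 0 < n) (ω : Fin n → X0) : ∑ x, popState n ω x = 1 := by
  have hcard : ∑ x : X0, ((univ.filter fun i => ω i = x).card : ℝ) = n := by
    exact_mod_cast (card_eq_sum_card_fiberwise fun i _ => mem_univ (ω i)).symm.trans
      (card_fin n)
  simp only [popState, ← sum_div, hcard]
  field_simp

theorem sum_comp_eq_mul_sum_popState (hn : 0 < n) (ω : Fin n → X0) (F : X0 → ℝ) :
    ∑ i, F (ω i) = n * ∑ x, popState n ω x * F x := by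
  rw [← sum_fiberwise univ ω, mul_sum]
  refine sum_congr rfl fun x _ => ?_
  rw [sum_congr rfl fun i hi => by rw [(mem_filter.mp hi).2], sum_const,
    nsmul_eq_mul, popState]
  field_simp

end Population

variable {S : Type*} {X0 : Type*} [Fintype S] [DecidableEq S] [Fintype X0]

section Expectation

variable (M : ElecModel S X0)

theorem histProb_nonneg (s0 : S) (h : ℕ → S) : 0 ≤ M.histProb s0 h :=
  mul_nonneg (by split_ifs <;> norm_num) (prod_nonneg fun _ _ => M.K_nonneg _ _)

theorem sum_histProb (s0 : S) :
    ∑ g, M.histProb s0 (M.extendHist g) = 1 := by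
  rw [← sum_indicator_mul_prod_transition_eq_one M.K M.K_sum M.T s0]
  refine sum_congr rfl fun g _ => ?_
  have hstage : ∀ i : Fin (M.T + 1), M.extendHist g i = g i := fun i => by
    simp [extendHist, Nat.min_eq_left (Nat.le_of_lt_succ i.isLt)]
  have hinit : M.extendHist g 0 = g 0 := hstage 0
  simp only [histProb, hinit, ← Fin.prod_univ_eq_prod_range]
  congr 1
  refine prod_congr rfl fun t _ => ?_
  rw [show (t : ℕ) + 1 = t.succ from rfl, show (t : ℕ) = t.castSucc from rfl, hstage, hstage]

theorem expectHist_const_mul (s0 : S) (c : ℝ) (F : (ℕ → S) → ℝ) :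
    M.expectHist s0 (fun h => c * F h) = c * M.expectHist s0 F := by
  simp only [expectHist, mul_sum]
  exact sum_congr rfl fun _ _ => mul_left_comm _ _ _

theorem abs_expectHist_sub_le (s0 : S) {F G : (ℕ → S) → ℝ} {c : ℝ}
    (hFG : ∀ h, |F h - G h| ≤ c) : |M.expectHist s0 F - M.expectHist s0 G| ≤ c := by
  calc |M.expectHist s0 F - M.expectHist s0 G|
      = |∑ g, M.histProb s0 (M.extendHist g) * (F (M.extendHist g) - G (M.extendHist g))| := by
        simp only [expectHist, ← sum_sub_distrib, mul_sub]
    _ ≤ ∑ g, M.histProb s0 (M.extendHist g) * c := by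
        refine (abs_sum_le_sum_abs _ _).trans (sum_le_sum fun g _ => ?_)
        rw [abs_mul, abs_of_nonneg (M.histProb_nonneg _ _)]
        exact mul_le_mul_of_nonneg_left (hFG _) (M.histProb_nonneg _ _)
    _ = c := by rw [← sum_mul, M.sum_histProb, one_mul]

end Expectation

section WeightedWelfare

variable {M : ElecModel S X0}

def demandWith (ϑ : OblStrategy M) (f : X0 → ℝ) (h : ℕ → S) (t : ℕ) : ℝ :=
  ∑ x, f x * ϑ.act t x h

def stageWelfareWith (ϑ : OblStrategy M) (f : X0 → ℝ) (h : ℕ → S) (t : ℕ) : ℝ :=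
  (∑ x, f x * M.U t x (M.zTraj x h (fun τ => ϑ.act τ x h) t) (h t) (ϑ.act t x h))
    - M.Cc (M.demandWith ϑ f h t) (h t)
    - (if t = 0 then M.Hc0 (M.demandWith ϑ f h 0) (h 0)
        else M.Hc (M.demandWith ϑ f h (t - 1)) (M.demandWith ϑ f h t) (h (t - 1)) (h t))

theorem contStageWelfare_eq_stageWelfareWith (ϑ : OblStrategy M) (s0 : S) (h : ℕ → S)
    (t : ℕ) : M.contStageWelfare ϑ s0 h t = M.stageWelfareWith ϑ (M.eta s0) h t :=
  rfl

theorem demandWith_mem_Icc (ϑ : OblStrategy M) {f : X0 → ℝ} (hf : ∀ x, 0 ≤ f x)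
    (hf1 : ∑ x, f x = 1) (h : ℕ → S) (t : ℕ) : M.demandWith ϑ f h t ∈ Set.Icc 0 M.B :=
  sum_mul_mem_Icc hf hf1 fun x => ϑ.act_mem t x h

theorem abs_demandWith_sub_le (ϑ : OblStrategy M) {f f' : X0 → ℝ} {δ : ℝ}
    (hff' : ∀ x, |f x - f' x| ≤ δ) (h : ℕ → S) (t : ℕ) :
    |M.demandWith ϑ f h t - M.demandWith ϑ f' h t| ≤ Fintype.card X0 * (δ * M.B) :=
  abs_sum_mul_sub_sum_mul_le hff' fun x => by
    obtain ⟨h0, hB⟩ := ϑ.act_mem t x h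
    rwa [abs_of_nonneg h0]

theorem jointTraj_toHist (n : ℕ) (ϑ : OblStrategy M) (ω : Fin n → X0) (h : ℕ → S) (t : ℕ)
    (i : Fin n) :
    M.jointTraj n ϑ.toHist ω h t i
      = (ϑ.act t (ω i) h, M.zTraj (ω i) h (fun τ => ϑ.act τ (ω i) h) t) := by
  induction t generalizing i with
  | zero => simp [jointTraj, zTraj, OblStrategy.toHist]
  | succ t ih =>
    simp only [jointTraj, ih]
    simp [zTraj, OblStrategy.toHist]

variable [DecidableEq X0] {n : ℕ}

theorem aggDemandAll_toHist (hn : 0 < n) (ϑ : OblStrategy M) (ω : Fin n → X0) (h : ℕ → S)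
    (t : ℕ) : M.aggDemandAll n ϑ.toHist ω h t / n = M.demandWith ϑ (popState n ω) h t := by
  simp only [aggDemandAll, jointTraj_toHist,
    sum_comp_eq_mul_sum_popState hn ω fun x => ϑ.act t x h]
  field_simp
  rfl

theorem welfProfile_toHist (hn : 0 < n) (ϑ : OblStrategy M) (ω : Fin n → X0) (h : ℕ → S) :
    M.welfProfile n ϑ.toHist ω h
      = n * ∑ t ∈ range (M.T + 1), M.stageWelfareWith ϑ (popState n ω) h t := by
  simp only [welfProfile, stageWelfareWith, aggDemandAll_toHist hn, jointTraj_toHist, mul_sum]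
  refine sum_congr rfl fun t _ => ?_
  rw [sum_comp_eq_mul_sum_popState hn ω
    fun x => M.U t x (M.zTraj x h (fun τ => ϑ.act τ x h) t) (h t) (ϑ.act t x h)]
  split_ifs <;> ring

end WeightedWelfare

namespace RegularAssumptions

variable {M : ElecModel S X0} {P Q : ℝ}

theorem bound_nonneg (hreg : M.RegularAssumptions P Q) (s : S) : 0 ≤ P :=
  (abs_nonneg _).trans (hreg.bound_C s 0 Set.self_mem_Ici)

theorem abs_Cc_sub_le (hreg : M.RegularAssumptions P Q) (s : S) {a b : ℝ} (ha : 0 ≤ a)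
    (hb : 0 ≤ b) : |M.Cc a s - M.Cc b s| ≤ P * |a - b| :=
  abs_sub_le_of_hasDerivWithinAt_Ici (hreg.deriv_C s) (hreg.bound_C s) ha hb

theorem abs_Hc0_sub_le (hreg : M.RegularAssumptions P Q) (s : S) {a b : ℝ} (ha : 0 ≤ a)
    (hb : 0 ≤ b) : |M.Hc0 a s - M.Hc0 b s| ≤ P * |a - b| :=
  abs_sub_le_of_hasDerivWithinAt_Ici (hreg.deriv_H0 s) (hreg.bound_H0 s) ha hb

theorem abs_Hc_sub_le (hreg : M.RegularAssumptions P Q) (s s' : S) {a a' b b' : ℝ}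
    (ha : 0 ≤ a) (ha' : a' ∈ Set.Icc 0 M.B) (hb : b ∈ Set.Icc 0 M.B) (hb' : 0 ≤ b') :
    |M.Hc a a' s s' - M.Hc b b' s s'| ≤ P * (|a - b| + |a' - b'|) := by
  have h1 : |M.Hc a a' s s' - M.Hc b a' s s'| ≤ P * |a - b| :=
    abs_sub_le_of_hasDerivWithinAt_Ici (hreg.deriv_H1 s s' a')
      (hreg.bound_H1 s s' a' ha') ha hb.1
  have h2 : |M.Hc b a' s s' - M.Hc b b' s s'| ≤ P * |a' - b'| :=
    abs_sub_le_of_hasDerivWithinAt_Ici (hreg.deriv_H2 s s' b)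
      (hreg.bound_H2 s s' b hb) ha'.1 hb'
  calc |M.Hc a a' s s' - M.Hc b b' s s'|
      ≤ |M.Hc a a' s s' - M.Hc b a' s s'| + |M.Hc b a' s s' - M.Hc b b' s s'| :=
        abs_sub_le _ _ _
    _ ≤ P * (|a - b| + |a' - b'|) := by linarith

theorem abs_stageWelfareWith_sub_le (hreg : M.RegularAssumptions P Q) (ϑ : OblStrategy M)
    {f f' : X0 → ℝ} (hf : ∀ x, 0 ≤ f x) (hf1 : ∑ x, f x = 1) (hf' : ∀ x, 0 ≤ f' x)
    (hf'1 : ∑ x, f' x = 1) {δ : ℝ} (hff' : ∀ x, |f x - f' x| ≤ δ) (h : ℕ → S) (t : ℕ) :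
    |M.stageWelfareWith ϑ f h t - M.stageWelfareWith ϑ f' h t|
      ≤ Fintype.card X0 * δ * (Q + 3 * P * M.B) := by
  set D := Fintype.card X0 * (δ * M.B)
  have hP := hreg.bound_nonneg (h 0)
  have hA := M.demandWith_mem_Icc ϑ hf hf1 h
  have hA' := M.demandWith_mem_Icc ϑ hf' hf'1 h
  have hAA' := M.abs_demandWith_sub_le ϑ hff' h
  have hU := abs_sum_mul_sub_sum_mul_le hff' (G := Q) fun x => by
    obtain ⟨h0, hQ⟩ := hreg.U_bounds t x (M.zTraj x h (fun τ => ϑ.act τ x h) t) (h t)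
      (ϑ.act t x h)
    rwa [abs_of_nonneg h0]
  have hC : |M.Cc (M.demandWith ϑ f h t) (h t) - M.Cc (M.demandWith ϑ f' h t) (h t)|
      ≤ P * D :=
    (hreg.abs_Cc_sub_le _ (hA t).1 (hA' t).1).trans (mul_le_mul_of_nonneg_left (hAA' t) hP)
  have hH : |(if t = 0 then M.Hc0 (M.demandWith ϑ f h 0) (h 0)
        else M.Hc (M.demandWith ϑ f h (t - 1)) (M.demandWith ϑ f h t) (h (t - 1)) (h t))
      - (if t = 0 then M.Hc0 (M.demandWith ϑ f' h 0) (h 0)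
        else M.Hc (M.demandWith ϑ f' h (t - 1)) (M.demandWith ϑ f' h t) (h (t - 1)) (h t))|
      ≤ 2 * (P * D) := by
    have hPD : 0 ≤ P * D := mul_nonneg hP ((abs_nonneg _).trans (hAA' 0))
    split_ifs
    · have := (hreg.abs_Hc0_sub_le (h 0) (hA 0).1 (hA' 0).1).trans
        (mul_le_mul_of_nonneg_left (hAA' 0) hP)
      linarith
    · refine (hreg.abs_Hc_sub_le _ _ (hA _).1 (hA t) (hA' _) (hA' t).1).trans ?_
      have := mul_le_mul_of_nonneg_left (add_le_add (hAA' (t - 1)) (hAA' t)) hP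
      linarith
  calc |M.stageWelfareWith ϑ f h t - M.stageWelfareWith ϑ f' h t|
      ≤ Fintype.card X0 * (δ * Q) + P * D + 2 * (P * D) := by
        unfold stageWelfareWith
        rw [abs_le] at hU hC hH ⊢
        constructor <;> linarith [hU.1, hU.2, hC.1, hC.2, hH.1, hH.2]
    _ = Fintype.card X0 * δ * (Q + 3 * P * M.B) := by ring

variable [DecidableEq X0]

theorem abs_welfProfile_sub_le (hreg : M.RegularAssumptions P Q) {n : ℕ} (hn : 0 < n)
    {s0 : S} {ω : Fin n → X0} {δ : ℝ} (hω : ∀ x, |popState n ω x - M.eta s0 x| ≤ δ)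
    (ϑ : OblStrategy M) (h : ℕ → S) :
    |M.welfProfile n ϑ.toHist ω h - n * ∑ t ∈ range (M.T + 1), M.contStageWelfare ϑ s0 h t|
      ≤ n * ((M.T + 1) * (Fintype.card X0 * δ * (Q + 3 * P * M.B))) := by
  rw [welfProfile_toHist hn, ← mul_sub, abs_mul, Nat.abs_cast, ← sum_sub_distrib]
  simp only [contStageWelfare_eq_stageWelfareWith]
  gcongr
  calc |∑ t ∈ range (M.T + 1),
          (M.stageWelfareWith ϑ (popState n ω) h t - M.stageWelfareWith ϑ (M.eta s0) h t)|
      ≤ ∑ _t ∈ range (M.T + 1), Fintype.card X0 * δ * (Q + 3 * P * M.B) :=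
        (abs_sum_le_sum_abs _ _).trans <| sum_le_sum fun t _ =>
          hreg.abs_stageWelfareWith_sub_le ϑ (popState_nonneg ω) (sum_popState hn ω)
            (M.eta_nonneg s0) (M.eta_sum s0) hω h t
    _ = (M.T + 1) * (Fintype.card X0 * δ * (Q + 3 * P * M.B)) := by simp

end RegularAssumptions

end ElecModel

open ElecModel in
/-- Step 1, Eq. (EC.22), of the proof of Theorem 2(b). If the initial
population state of an `n`-consumer game is close to its expectation `η_{s₀}`, the social
welfare achieved by any dynamic oblivious strategy is close, per consumer, to its
continuum counterpart: for every `ε > 0` there is `δ > 0` such that for every `n`, every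
initial population state (empirical type distribution of a type profile `ω`) within `δ`
of `η_{s₀}` in the sup metric, and every dynamic oblivious strategy `ϑ`,
`|𝒲ⁿ₀(fⁿ₀, s₀ ∣ ϑ) - n · W̃₀(s₀ ∣ ϑ)| ≤ ε n`. -/
theorem welfare_close_to_continuum_welfare
    {S : Type*} {X0 : Type*} [Fintype S] [DecidableEq S] [Fintype X0] [DecidableEq X0]
    (M : ElecModel S X0) (P Q : ℝ)
    (hreg : RegularAssumptions M P Q) :
    ∀ (s0 : S), ∀ ε > (0 : ℝ), ∃ δ > (0 : ℝ), ∀ (n : ℕ), 0 < n → ∀ ω : Fin n → X0,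
      (∀ x : X0, |popState n ω x - M.eta s0 x| ≤ δ) →
      ∀ ϑ : OblStrategy M,
        |M.expectHist s0 (fun h => M.welfProfile n ϑ.toHist ω h)
            - (n : ℝ) * M.contWelfare ϑ s0| ≤ ε * n := by
  intro s0 ε hε
  set c : ℝ := (M.T + 1) * (Fintype.card X0 * (Q + 3 * P * M.B))
  have hc : c * (ε / max c 1) ≤ ε := by
    calc c * (ε / max c 1) ≤ max c 1 * (ε / max c 1) := by gcongr; exact le_max_left c 1
      _ = ε := by field_simp
  refine ⟨ε / max c 1, by positivity, fun n hn ω hω ϑ => ?_⟩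
  calc |M.expectHist s0 (fun h => M.welfProfile n ϑ.toHist ω h) - n * M.contWelfare ϑ s0|
      = |M.expectHist s0 (fun h => M.welfProfile n ϑ.toHist ω h) - M.expectHist s0
          (fun h => n * ∑ t ∈ range (M.T + 1), M.contStageWelfare ϑ s0 h t)| := by
        rw [contWelfare, expectHist_const_mul]
    _ ≤ n * ((M.T + 1) * (Fintype.card X0 * (ε / max c 1) * (Q + 3 * P * M.B))) :=
        M.abs_expectHist_sub_le s0 fun h => hreg.abs_welfProfile_sub_le hn hω ϑ h
    _ = n * (c * (ε / max c 1)) := by ring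
    _ ≤ ε * n := by rw [mul_comm ε]; exact mul_le_mul_of_nonneg_left hc n.cast_nonneg
end
end

section
/- In the two-stage deterministic market with one consumer and one supplier, there exists a competitive equilibrium: there exist a₀, a₁ ∈ (0,B) satisfying the first-order conditions U₀′(a₀) = C′(a₀) − H′(a₁ − a₀) and U₁′(a₁) = C′(a₁) + H′(a₁ − a₀); moreover, (a₀, a₁) maximizes the social welfare W(x₀,x₁) = U₀(x₀) + U₁(x₁) − C(x₀) − C(x₁) − H(x₁ − x₀) over [0,B]². -/
/-!
The welfare is continuous on the compact square `[0,B]²`, so it attains its maximum at some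
`(a₀, a₁)`, and each coordinate slice is maximized on `[0,B]` at `a₀` resp. `a₁`. A maximum at an
endpoint of `[0,B]` forces a sign on the one-sided derivative there. Since `H` is convex with
`H′(0) = 0`, the term `H′(a₁ - a₀)` has the sign of `a₁ - a₀`, and together with `U_t′ > C′` at `0`
and `U_t′ < C′` at `B` this gives the opposite sign in every boundary case. So `(a₀, a₁)` is
interior, and Fermat's theorem on both slices yields the first-order conditions.
-/

open Set

theorem ConvexOn.monotone_of_hasDerivAt {f f' : ℝ → ℝ} (hf : ConvexOn ℝ univ f)
    (hd : ∀ x, HasDerivAt f (f' x) x) : Monotone f' := by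
  intro x y hxy
  rw [← (hd x).deriv, ← (hd y).deriv]
  exact hf.monotoneOn_deriv (fun x _ => (hd x).differentiableAt) (mem_univ x) (mem_univ y) hxy

section MaxOnIcc

variable {g : ℝ → ℝ} {a b d : ℝ}

theorem IsMaxOn.hasDerivWithinAt_nonpos_of_left (hab : a < b)
    (hmax : IsMaxOn g (Icc a b) a) (hg : HasDerivWithinAt g d (Icc a b) a) : d ≤ 0 := by
  have hcone : b - a ∈ posTangentConeAt (Icc a b) a :=
    sub_mem_posTangentConeAt_of_segment_subset (segment_eq_Icc hab.le).subset
  have h := hmax.localize.hasFDerivWithinAt_nonpos hg hcone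
  simp only [ContinuousLinearMap.toSpanSingleton_apply, smul_eq_mul] at h
  exact nonpos_of_mul_nonpos_right h (sub_pos.2 hab)

theorem IsMaxOn.hasDerivWithinAt_nonneg_of_right (hab : a < b)
    (hmax : IsMaxOn g (Icc a b) b) (hg : HasDerivWithinAt g d (Icc a b) b) : 0 ≤ d := by
  have hcone : a - b ∈ posTangentConeAt (Icc a b) b :=
    sub_mem_posTangentConeAt_of_segment_subset ((segment_symm ℝ b a).trans_subset
      (segment_eq_Icc hab.le).subset)
  have h := hmax.localize.hasFDerivWithinAt_nonpos hg hcone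
  simp only [ContinuousLinearMap.toSpanSingleton_apply, smul_eq_mul] at h
  nlinarith

theorem IsMaxOn.mem_Ioo_and_eq_zero_of_hasDerivWithinAt {x : ℝ} (hab : a < b)
    (hx : x ∈ Icc a b) (hmax : IsMaxOn g (Icc a b) x) (hg : HasDerivWithinAt g d (Icc a b) x)
    (hleft : x = a → 0 < d) (hright : x = b → d < 0) : x ∈ Ioo a b ∧ d = 0 := by
  have hxa : a < x := hx.1.lt_of_ne fun h => by
    subst h; exact (hleft rfl).not_ge (hmax.hasDerivWithinAt_nonpos_of_left hab hg)
  have hxb : x < b := hx.2.lt_of_ne fun h => by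
    subst h; exact (hright rfl).not_ge (hmax.hasDerivWithinAt_nonneg_of_right hab hg)
  have hnhds : Icc a b ∈ nhds x := Icc_mem_nhds hxa hxb
  exact ⟨⟨hxa, hxb⟩, (hmax.isLocalMax hnhds).hasDerivAt_eq_zero (hg.hasDerivAt hnhds)⟩

end MaxOnIcc

def welfare (U0 U1 C H : ℝ → ℝ) (x0 x1 : ℝ) : ℝ :=
  U0 x0 + U1 x1 - C x0 - C x1 - H (x1 - x0)

section Welfare

variable {U0 U1 C H : ℝ → ℝ} {s : Set ℝ}

theorem continuousOn_uncurry_welfare (hU0 : ContinuousOn U0 s) (hU1 : ContinuousOn U1 s)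
    (hC : ContinuousOn C s) (hH : Continuous H) :
    ContinuousOn (Function.uncurry (welfare U0 U1 C H)) (s ×ˢ s) := by
  have hfst : MapsTo Prod.fst (s ×ˢ s) s := fun _ hp => hp.1
  have hsnd : MapsTo Prod.snd (s ×ˢ s) s := fun _ hp => hp.2
  exact ((((hU0.comp continuousOn_fst hfst).add (hU1.comp continuousOn_snd hsnd)).sub
    (hC.comp continuousOn_fst hfst)).sub (hC.comp continuousOn_snd hsnd)).sub
    (hH.comp (continuous_snd.sub continuous_fst)).continuousOn

theorem hasDerivWithinAt_welfare_left {u c h x0 : ℝ} (x1 : ℝ)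
    (hU0 : HasDerivWithinAt U0 u s x0) (hC : HasDerivWithinAt C c s x0)
    (hH : HasDerivAt H h (x1 - x0)) :
    HasDerivWithinAt (welfare U0 U1 C H · x1) (u - c + h) s x0 := by
  have hH' : HasDerivAt (fun x => H (x1 - x)) (h * (0 - 1)) x0 :=
    hH.comp x0 ((hasDerivAt_const x0 x1).sub (hasDerivAt_id x0))
  exact ((((hU0.add_const (U1 x1)).sub hC).sub_const (C x1)).sub hH'.hasDerivWithinAt).congr_deriv
    (by ring)

theorem hasDerivWithinAt_welfare_right {u c h x1 : ℝ} (x0 : ℝ)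
    (hU1 : HasDerivWithinAt U1 u s x1) (hC : HasDerivWithinAt C c s x1)
    (hH : HasDerivAt H h (x1 - x0)) :
    HasDerivWithinAt (welfare U0 U1 C H x0 ·) (u - c - h) s x1 := by
  have hH' : HasDerivAt (fun x => H (x - x0)) (h * (1 - 0)) x1 :=
    hH.comp x1 ((hasDerivAt_id x1).sub (hasDerivAt_const x1 x0))
  exact ((((hU1.const_add (U0 x0)).sub_const (C x0)).sub hC).sub hH'.hasDerivWithinAt).congr_deriv
    (by ring)

end Welfare

theorem two_stage_competitive_equilibrium_exists_general
    (B : ℝ) (hB : 0 < B)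
    (U0 U1 C H : ℝ → ℝ) (dU0 dU1 dC dH : ℝ → ℝ)
    (hHconv : ConvexOn ℝ Set.univ H)
    (hdU0 : ∀ x ∈ Set.Ici (0 : ℝ), HasDerivWithinAt U0 (dU0 x) (Set.Ici 0) x)
    (hdU1 : ∀ x ∈ Set.Ici (0 : ℝ), HasDerivWithinAt U1 (dU1 x) (Set.Ici 0) x)
    (hdC : ∀ x ∈ Set.Ici (0 : ℝ), HasDerivWithinAt C (dC x) (Set.Ici 0) x)
    (hdH : ∀ x : ℝ, HasDerivAt H (dH x) x)
    (hdH0 : dH 0 = 0)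
    (h00 : dC 0 < dU0 0) (h0B : dU0 B < dC B)
    (h10 : dC 0 < dU1 0) (h1B : dU1 B < dC B) :
    ∃ a0 ∈ Set.Ioo (0 : ℝ) B, ∃ a1 ∈ Set.Ioo (0 : ℝ) B,
      dU0 a0 = dC a0 - dH (a1 - a0) ∧
      dU1 a1 = dC a1 + dH (a1 - a0) ∧
      ∀ x0 ∈ Set.Icc (0 : ℝ) B, ∀ x1 ∈ Set.Icc (0 : ℝ) B,
        U0 x0 + U1 x1 - C x0 - C x1 - H (x1 - x0) ≤
          U0 a0 + U1 a1 - C a0 - C a1 - H (a1 - a0) := by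
  have hIcc : Icc 0 B ⊆ Ici (0 : ℝ) := Icc_subset_Ici_self
  have hderiv {F dF : ℝ → ℝ} (hF : ∀ x ∈ Ici (0 : ℝ), HasDerivWithinAt F (dF x) (Ici 0) x)
      (x : ℝ) (hx : x ∈ Icc 0 B) : HasDerivWithinAt F (dF x) (Icc 0 B) x :=
    (hF x (hIcc hx)).mono hIcc
  have hcont {F dF : ℝ → ℝ} (hF : ∀ x ∈ Ici (0 : ℝ), HasDerivWithinAt F (dF x) (Ici 0) x) :
      ContinuousOn F (Icc 0 B) := fun x hx => (hderiv hF x hx).continuousWithinAt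
  have hdH_mono := hHconv.monotone_of_hasDerivAt hdH
  obtain ⟨⟨a0, a1⟩, ⟨ha0, ha1⟩, hmax⟩ :=
    (isCompact_Icc.prod isCompact_Icc).exists_isMaxOn
      ⟨(0, 0), ⟨left_mem_Icc.2 hB.le, left_mem_Icc.2 hB.le⟩⟩
      (continuousOn_uncurry_welfare (hcont hdU0) (hcont hdU1) (hcont hdC)
        (continuous_iff_continuousAt.2 fun x => (hdH x).continuousAt))
  have hmax0 : IsMaxOn (welfare U0 U1 C H · a1) (Icc 0 B) a0 :=
    fun x hx => hmax (mk_mem_prod hx ha1)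
  have hmax1 : IsMaxOn (welfare U0 U1 C H a0 ·) (Icc 0 B) a1 :=
    fun x hx => hmax (mk_mem_prod ha0 hx)
  obtain ⟨ha0', foc0⟩ := hmax0.mem_Ioo_and_eq_zero_of_hasDerivWithinAt hB ha0
    (hasDerivWithinAt_welfare_left a1 (hderiv hdU0 a0 ha0) (hderiv hdC a0 ha0) (hdH _))
    (by rintro rfl; linarith [hdH_mono (sub_nonneg.2 ha1.1)])
    (by rintro rfl; linarith [hdH_mono (sub_nonpos.2 ha1.2)])
  obtain ⟨ha1', foc1⟩ := hmax1.mem_Ioo_and_eq_zero_of_hasDerivWithinAt hB ha1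
    (hasDerivWithinAt_welfare_right a0 (hderiv hdU1 a1 ha1) (hderiv hdC a1 ha1) (hdH _))
    (by rintro rfl; linarith [hdH_mono (sub_nonpos.2 ha0.1)])
    (by rintro rfl; linarith [hdH_mono (sub_nonneg.2 ha0.2)])
  exact ⟨a0, ha0', a1, ha1', by linarith, by linarith,
    fun x0 hx0 x1 hx1 => hmax (mk_mem_prod hx0 hx1)⟩

/-- Example 1 of the paper. In the two-stage deterministic market with
one consumer and one supplier (concave, continuously differentiable utilities `U0, U1`
on `[0,∞)` with derivative functions `dU0, dU1`; convex, continuously differentiable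
costs `C` on `[0,∞)` and `H` on `ℝ` with derivatives `dC`, `dH`; `H'(0) = 0`;
`U_t'(0) > C'(0)` and `U_t'(B) < C'(B)` for `t = 0,1`), there exists a competitive
equilibrium: there exist `a0, a1 ∈ (0,B)` satisfying the first-order conditions
`U0'(a0) = C'(a0) - H'(a1 - a0)` and `U1'(a1) = C'(a1) + H'(a1 - a0)`; moreover
`(a0, a1)` maximizes the social welfare
`W(x0,x1) = U0 x0 + U1 x1 - C x0 - C x1 - H (x1 - x0)` over `[0,B]²`. -/
theorem two_stage_competitive_equilibrium_exists
    (B : ℝ) (hB : 0 < B)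
    (U0 U1 C H : ℝ → ℝ) (dU0 dU1 dC dH : ℝ → ℝ)
    (hU0nonneg : ∀ x ∈ Set.Ici (0 : ℝ), 0 ≤ U0 x)
    (hU1nonneg : ∀ x ∈ Set.Ici (0 : ℝ), 0 ≤ U1 x)
    (hCnonneg : ∀ x ∈ Set.Ici (0 : ℝ), 0 ≤ C x)
    (hHnonneg : ∀ x : ℝ, 0 ≤ H x)
    (hU0conc : ConcaveOn ℝ (Set.Ici 0) U0)
    (hU1conc : ConcaveOn ℝ (Set.Ici 0) U1)
    (hCconv : ConvexOn ℝ (Set.Ici 0) C)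
    (hHconv : ConvexOn ℝ Set.univ H)
    (hdU0 : ∀ x ∈ Set.Ici (0 : ℝ), HasDerivWithinAt U0 (dU0 x) (Set.Ici 0) x)
    (hdU1 : ∀ x ∈ Set.Ici (0 : ℝ), HasDerivWithinAt U1 (dU1 x) (Set.Ici 0) x)
    (hdC : ∀ x ∈ Set.Ici (0 : ℝ), HasDerivWithinAt C (dC x) (Set.Ici 0) x)
    (hdH : ∀ x : ℝ, HasDerivAt H (dH x) x)
    (hdU0cont : ContinuousOn dU0 (Set.Ici 0))
    (hdU1cont : ContinuousOn dU1 (Set.Ici 0))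
    (hdCcont : ContinuousOn dC (Set.Ici 0))
    (hdHcont : Continuous dH)
    (hdH0 : dH 0 = 0)
    (h00 : dC 0 < dU0 0) (h0B : dU0 B < dC B)
    (h10 : dC 0 < dU1 0) (h1B : dU1 B < dC B) :
    ∃ a0 ∈ Set.Ioo (0 : ℝ) B, ∃ a1 ∈ Set.Ioo (0 : ℝ) B,
      dU0 a0 = dC a0 - dH (a1 - a0) ∧
      dU1 a1 = dC a1 + dH (a1 - a0) ∧
      ∀ x0 ∈ Set.Icc (0 : ℝ) B, ∀ x1 ∈ Set.Icc (0 : ℝ) B,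
        U0 x0 + U1 x1 - C x0 - C x1 - H (x1 - x0) ≤
          U0 a0 + U1 a1 - C a0 - C a1 - H (a1 - a0) :=
  two_stage_competitive_equilibrium_exists_general B hB U0 U1 C H dU0 dU1 dC dH hHconv hdU0 hdU1 hdC
    hdH hdH0 h00 h0B h10 h1B
end

section
/- Marginal cost pricing is not socially optimal in the presence of ancillary costs: in the two-stage deterministic market, suppose (a₀,a₁) ∈ (0,B)² satisfies the socially optimal first-order conditions U₀′(a₀) = C′(a₀) − H′(a₁ − a₀) and U₁′(a₁) = C′(a₁) + H′(a₁ − a₀), and that H′(a₁ − a₀) > 0. Then under the marginal cost prices p̂₀ = C′(a₀) and p̂₁ = C′(a₁) + H′(a₁ − a₀), the socially optimal point (a₀,a₁) does NOT maximize the consumer's payoff U₀(x₀) − p̂₀ x₀ + U₁(x₁) − p̂₁ x₁ over (x₀,x₁) ∈ [0,B]²; in particular U₀′(a₀) < p̂₀, so the consumer strictly gains by reducing her stage-0 demand below a₀. -/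
/-!
Under marginal cost pricing the consumer's marginal stage-0 payoff at the social optimum is
`U₀'(a₀) - p̂₀ = -H'(a₁ - a₀) < 0`: the price `p̂₀ = C'(a₀)` does not credit her with the
ancillary cost that stage-0 demand saves at stage 1. Since `a₀` is interior, lowering `x₀` slightly below `a₀` strictly raises her payoff.
-/

open Set Filter Topology

theorem HasDerivWithinAt.exists_mem_Ioo_lt_of_neg {f : ℝ → ℝ} {f' a l : ℝ}
    (hf : HasDerivWithinAt f f' (Iio a) a) (hf' : f' < 0) (hl : l < a) :
    ∃ x ∈ Ioo l a, f a < f x := by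
  have hslope : Tendsto (slope f a) (𝓝[<] a) (𝓝 f') :=
    (hasDerivWithinAt_iff_tendsto_slope' self_notMem_Iio).mp hf
  obtain ⟨x, hneg, hx⟩ :=
    ((hslope.eventually_lt_const hf').and (Ioo_mem_nhdsLT hl)).exists
  rw [slope_def_field, div_neg_iff] at hneg
  refine ⟨x, hx, ?_⟩
  rcases hneg with ⟨hgain, -⟩ | ⟨-, hax⟩
  · linarith
  · linarith [hx.2]

theorem marginal_cost_pricing_not_socially_optimal_general
    (B : ℝ)
    (U0 U1 : ℝ → ℝ) (dU0 dC dH : ℝ → ℝ)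
    (hdU0 : ∀ x ∈ Set.Ici (0 : ℝ), HasDerivWithinAt U0 (dU0 x) (Set.Ici 0) x)
    (a0 a1 : ℝ) (ha0 : a0 ∈ Set.Ioo (0 : ℝ) B) (ha1 : a1 ∈ Set.Ioo (0 : ℝ) B)
    (hfoc0 : dU0 a0 = dC a0 - dH (a1 - a0))
    (hH'pos : 0 < dH (a1 - a0)) :
    ¬ (∀ x0 ∈ Set.Icc (0 : ℝ) B, ∀ x1 ∈ Set.Icc (0 : ℝ) B,
        U0 x0 - dC a0 * x0 + (U1 x1 - (dC a1 + dH (a1 - a0)) * x1) ≤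
          U0 a0 - dC a0 * a0 + (U1 a1 - (dC a1 + dH (a1 - a0)) * a1)) ∧
    dU0 a0 < dC a0 ∧
    ∃ x0 ∈ Set.Ico (0 : ℝ) a0,
      U0 a0 - dC a0 * a0 < U0 x0 - dC a0 * x0 := by
  obtain ⟨ha0pos, ha0B⟩ := ha0
  have hprice : dU0 a0 < dC a0 := by linarith
  have hpayoff : HasDerivAt (fun x => U0 x - dC a0 * x) (dU0 a0 - dC a0) a0 := by
    have hU0 := (hdU0 a0 ha0pos.le).hasDerivAt (Ici_mem_nhds ha0pos)
    exact hU0.sub (by simpa using (hasDerivAt_id' a0).const_mul (dC a0))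
  obtain ⟨x0, ⟨hx0pos, hx0a0⟩, hgain⟩ :=
    hpayoff.hasDerivWithinAt.exists_mem_Ioo_lt_of_neg (sub_neg.mpr hprice) ha0pos
  refine ⟨fun hmax => ?_, hprice, x0, ⟨hx0pos.le, hx0a0⟩, hgain⟩
  have := hmax x0 ⟨hx0pos.le, (hx0a0.trans ha0B).le⟩ a1 ⟨ha1.1.le, ha1.2.le⟩
  linarith

/-- Marginal cost pricing is not socially optimal in the presence of
ancillary costs: if `(a0, a1) ∈ (0,B)²` satisfies the socially optimal first-order
conditions `U0'(a0) = C'(a0) - H'(a1 - a0)` and `U1'(a1) = C'(a1) + H'(a1 - a0)`, and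
`H'(a1 - a0) > 0`, then under the marginal cost prices `p̂0 = C'(a0)` and
`p̂1 = C'(a1) + H'(a1 - a0)` the point `(a0, a1)` does NOT maximize the consumer's payoff
`U0 x0 - p̂0 x0 + U1 x1 - p̂1 x1` over `[0,B]²`; in particular `U0'(a0) < p̂0`, and the
consumer strictly gains by reducing her stage-0 demand below `a0`. -/
theorem marginal_cost_pricing_not_socially_optimal
    (B : ℝ) (hB : 0 < B)
    (U0 U1 C H : ℝ → ℝ) (dU0 dU1 dC dH : ℝ → ℝ)
    (hU0nonneg : ∀ x ∈ Set.Ici (0 : ℝ), 0 ≤ U0 x)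
    (hU1nonneg : ∀ x ∈ Set.Ici (0 : ℝ), 0 ≤ U1 x)
    (hCnonneg : ∀ x ∈ Set.Ici (0 : ℝ), 0 ≤ C x)
    (hHnonneg : ∀ x : ℝ, 0 ≤ H x)
    (hU0conc : ConcaveOn ℝ (Set.Ici 0) U0)
    (hU1conc : ConcaveOn ℝ (Set.Ici 0) U1)
    (hCconv : ConvexOn ℝ (Set.Ici 0) C)
    (hHconv : ConvexOn ℝ Set.univ H)
    (hdU0 : ∀ x ∈ Set.Ici (0 : ℝ), HasDerivWithinAt U0 (dU0 x) (Set.Ici 0) x)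
    (hdU1 : ∀ x ∈ Set.Ici (0 : ℝ), HasDerivWithinAt U1 (dU1 x) (Set.Ici 0) x)
    (hdC : ∀ x ∈ Set.Ici (0 : ℝ), HasDerivWithinAt C (dC x) (Set.Ici 0) x)
    (hdH : ∀ x : ℝ, HasDerivAt H (dH x) x)
    (hdU0cont : ContinuousOn dU0 (Set.Ici 0))
    (hdU1cont : ContinuousOn dU1 (Set.Ici 0))
    (hdCcont : ContinuousOn dC (Set.Ici 0))
    (hdHcont : Continuous dH)
    (a0 a1 : ℝ) (ha0 : a0 ∈ Set.Ioo (0 : ℝ) B) (ha1 : a1 ∈ Set.Ioo (0 : ℝ) B)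
    (hfoc0 : dU0 a0 = dC a0 - dH (a1 - a0))
    (hfoc1 : dU1 a1 = dC a1 + dH (a1 - a0))
    (hH'pos : 0 < dH (a1 - a0)) :
    ¬ (∀ x0 ∈ Set.Icc (0 : ℝ) B, ∀ x1 ∈ Set.Icc (0 : ℝ) B,
        U0 x0 - dC a0 * x0 + (U1 x1 - (dC a1 + dH (a1 - a0)) * x1) ≤
          U0 a0 - dC a0 * a0 + (U1 a1 - (dC a1 + dH (a1 - a0)) * a1)) ∧
    dU0 a0 < dC a0 ∧
    ∃ x0 ∈ Set.Ico (0 : ℝ) a0,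
      U0 a0 - dC a0 * a0 < U0 x0 - dC a0 * x0 :=
  marginal_cost_pricing_not_socially_optimal_general B U0 U1 dU0 dC dH hdU0 a0 a1 ha0 ha1 hfoc0
    hH'pos
end
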